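/- Let p ∈ NC(n), let B be a block of p with |B| = r, and let 1 ≤ i ≤ r−1. Then K(p_{B,i}) = K(p)_{C^B, C^B_i}, the partition obtained from K(p) by merging the upper enveloping block C^B of B with the lower enveloping block C^B_i of B. Dually, for a block C of K(p) and 1 ≤ i ≤ |C|−1, K(p)_{C,i} = K(p_{B^C, B^C_i}). -/

import Mathlib

/-!
Read on the even positions of `[2n]`, the Kreweras complement `K(q)` relates `x` and `y` exactly
when the interval `Ι x y = (min x y, max x y]` is a union of blocks of `q`. Splitting `B` at its
`i`-th element makes saturated the intervals that contain one half of `B` and avoid the other;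
these are obtained by gluing, along `(b_i, b_r]`, saturated intervals of `p` ending at `b_i` and
at `b_r`, so `K(p_{B,i})` merges the classes of `b_i` and `b_r`. Dually, merging the blocks of
`c₁` and `c_{i+1}` for a block `C` of `K(p)` destroys exactly the saturated intervals separating
`c₁` from `c_{i+1}`, which splits `C` after `c_i`.

It remains to identify the enveloping blocks. That `p°` stays non-crossing after merging two
adjacent blocks means that no other block links the inside of an interval between two merged
points to its outside. Applied to `b_i` and a point of `C^B_i` this gives `b_i ∈ C^B_i`; applied
to `b_r` it gives `b_r ∈ C^B` unless `C^B` lies inside a gap of `B`, which the depth condition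
excludes. The dual statements `c_{i+1} ∈ B^C_i` and `c₁ ∈ B^C` use in addition that two elements
in different blocks of `p` are separated by a class of `K(p)`.
-/

namespace NCPaper

/-- The index set `[n] = {1, …, n}` inside `ℕ`. -/
def Idx (n : ℕ) : Set ℕ := Set.Icc 1 n

/-- `r` is (the equivalence relation of) a partition of the set `S`:
a symmetric, transitive relation on `ℕ` whose domain is exactly `S`.
For `S ⊆ [n]` this encodes a partial partition of `[n]` with support `S`;
its blocks are the equivalence classes. -/
def IsPartitionOn (S : Set ℕ) (r : ℕ → ℕ → Prop) : Prop :=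
  (∀ i j, r i j → r j i) ∧ (∀ i j k, r i j → r j k → r i k) ∧ (∀ i, r i i ↔ i ∈ S)

/-- A partition (relation) is non-crossing if there are no `i < j < k < l`
with `i ∼ k`, `j ∼ l` and `i ≁ j`. -/
def NonCrossing (r : ℕ → ℕ → Prop) : Prop :=
  ∀ i j k l, i < j → j < k → k < l → r i k → r j l → r i j

/-- Refinement order on partitions encoded as relations:
`r ≤ s` iff every block of `r` is contained in a block of `s`. -/
def RelLE (r s : ℕ → ℕ → Prop) : Prop := ∀ i j, r i j → s i j

/-- Join of two partial partitions with complementary (disjoint) supports: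
the partition whose blocks are the blocks of `r` together with those of `s`. -/
def relJoin (r s : ℕ → ℕ → Prop) : ℕ → ℕ → Prop := fun i j => r i j ∨ s i j

/-- `k` lies (weakly) between `i` and `j`, i.e. `k ∈ {min i j, …, max i j}`. -/
def Between (i j k : ℕ) : Prop := min i j ≤ k ∧ k ≤ max i j

/-- The Kreweras complement `kr(r, S)` of the partial partition `(r, S)` of `[n]`:
the relation with support `[n] \ S` in which `i ∼ j` iff no element `k` of
`{i,…,j} ∩ S` is `r`-equivalent to an element `l` of `S \ {i,…,j}`. -/
def krRel (n : ℕ) (S : Set ℕ) (r : ℕ → ℕ → Prop) : ℕ → ℕ → Prop :=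
  fun i j => i ∈ Idx n ∧ j ∈ Idx n ∧ i ∉ S ∧ j ∉ S ∧
    ∀ k l, k ∈ S → l ∈ S → Between i j k → ¬ Between i j l → ¬ r k l

/-- Transport of a relation along a map. -/
def mapRel (f : ℕ → ℕ) (r : ℕ → ℕ → Prop) : ℕ → ℕ → Prop :=
  fun a b => ∃ i j, f i = a ∧ f j = b ∧ r i j

/-- `i ↦ 2i - δ(i)` where `δ(i) = 1` for odd `i` and `δ(i) = 0` for even `i`;
this maps `[2k]` onto `S = {1,4,5,8,…,4k-3,4k} ⊆ [4k]`. -/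
def fS (i : ℕ) : ℕ := 2 * i - i % 2

/-- `i ↦ 2i - (1 - δ(i))`; this maps `[2k]` onto `Sᶜ = {2,3,6,7,…} ⊆ [4k]`. -/
def fSc (i : ℕ) : ℕ := 2 * i - (1 - i % 2)

/-- The nested Kreweras complement `kr′(π)` of a partition `π` of `[2k]`:
transport `π` along `fS` to a partial partition of `[4k]` with support
`fS '' [2k]`, take its Kreweras complement and transport back along `fSc`. -/
def krNested (k : ℕ) (r : ℕ → ℕ → Prop) : ℕ → ℕ → Prop :=
  fun i j => krRel (4 * k) (fS '' Idx (2 * k)) (mapRel fS r) (fSc i) (fSc j)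

/-- `π₀`: the partition of `[2k]` with blocks `{2i, 2i+1}`, indices mod `2k`
(so one block is `{2k, 1}`). -/
def piZero (k : ℕ) : ℕ → ℕ → Prop := fun i j =>
  i ∈ Idx (2 * k) ∧ j ∈ Idx (2 * k) ∧
    (i = j ∨ (Even i ∧ j = i + 1) ∨ (Even j ∧ i = j + 1) ∨
      (i = 1 ∧ j = 2 * k) ∨ (j = 1 ∧ i = 2 * k))

/-- `π₁`: the partition of `[2k]` with blocks `{2i-1, 2i}`, `1 ≤ i ≤ k`. -/
def piOne (k : ℕ) : ℕ → ℕ → Prop := fun i j =>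
  i ∈ Idx (2 * k) ∧ j ∈ Idx (2 * k) ∧
    (i = j ∨ (Odd i ∧ j = i + 1) ∨ (Odd j ∧ i = j + 1))

/-- The `i`-th odd position `2i - 1` in `[2n]`. -/
def oddPos (i : ℕ) : ℕ := 2 * i - 1

/-- The `i`-th even position `2i` in `[2n]`. -/
def evenPos (i : ℕ) : ℕ := 2 * i

/-- The Kreweras complement `K(p)` of a partition `p` of `[n]`: transport `p`
along `i ↦ 2i-1` to the odd positions `σ = {1,3,…,2n-1}` of `[2n]`, take the
Kreweras complement there, and transport back along `i ↦ 2i`. -/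
def Kmap (n : ℕ) (r : ℕ → ℕ → Prop) : ℕ → ℕ → Prop :=
  fun i j => krRel (2 * n) (oddPos '' Idx n) (mapRel oddPos r) (evenPos i) (evenPos j)

/-- `p° = (p̂,σ) ∨ (K̂(p),σᶜ)`: the partition of `[2n]` obtained by placing `p`
on the odd positions and `K(p)` on the even positions. -/
def pCirc (n : ℕ) (p : ℕ → ℕ → Prop) : ℕ → ℕ → Prop :=
  relJoin (mapRel oddPos p) (mapRel evenPos (Kmap n p))

/-- `F(π)` for `π ≥ π₀`: `i ∼ j` iff `2i-1 ∼_π 2j-1`. -/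
def Fmap (r : ℕ → ℕ → Prop) : ℕ → ℕ → Prop := fun i j => r (2 * i - 1) (2 * j - 1)

/-- `G(π)` for `π ≥ π₁`: `i ∼ j` iff `2i ∼_π 2j`. -/
def Gmap (r : ℕ → ℕ → Prop) : ℕ → ℕ → Prop := fun i j => r (2 * i) (2 * j)

/-- `B` is a block of the partition (relation) `r`. -/
def IsBlock (r : ℕ → ℕ → Prop) (B : Set ℕ) : Prop := ∃ i, r i i ∧ B = {j | r i j}

/-- The number `|r|` of blocks of the partition `r`. -/
noncomputable def numBlocks (r : ℕ → ℕ → Prop) : ℕ := {B : Set ℕ | IsBlock r B}.ncard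

/-- `B' ⪯ B` for `B = {i₁<…<i_t}`, `B' = {j₁<…<j_{t'}}`: `i₁ < j₁` and `j_{t'} < i_t`. -/
def Nested (B' B : Set ℕ) : Prop := sInf B < sInf B' ∧ sSup B' < sSup B

/-- The depth `d_p(B)` of a block `B`: the maximal number `m` of blocks in a
chain `B = X₁ ⪯ X₂ ⪯ … ⪯ X_m` of blocks of `p`. -/
noncomputable def depth (p : ℕ → ℕ → Prop) (B : Set ℕ) : ℕ :=
  sSup {m : ℕ | ∃ c : ℕ → Set ℕ, c 1 = B ∧
    (∀ i, 1 ≤ i → i ≤ m → IsBlock p (c i)) ∧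
    (∀ i, 1 ≤ i → i < m → Nested (c i) (c (i + 1)))}

/-- `p_{B,B'}`: the partition obtained from `p` by merging the blocks `B` and `B'`. -/
def mergeRel (p : ℕ → ℕ → Prop) (B B' : Set ℕ) : ℕ → ℕ → Prop :=
  fun i j => p i j ∨ (p i i ∧ p j j ∧ i ∈ B ∪ B' ∧ j ∈ B ∪ B')

/-- Two distinct blocks `B, B'` of `p` are adjacent if replacing them by
`B ∪ B'` yields a non-crossing partition. -/
def Adjacent (p : ℕ → ℕ → Prop) (B B' : Set ℕ) : Prop :=
  IsBlock p B ∧ IsBlock p B' ∧ B ≠ B' ∧ NonCrossing (mergeRel p B B')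

/-- The set of the `i` smallest elements of `B`. -/
def lowerPart (B : Set ℕ) (i : ℕ) : Set ℕ := {x ∈ B | (B ∩ Set.Iic x).ncard ≤ i}

/-- The set of the remaining elements of `B` (all but the `i` smallest). -/
def upperPart (B : Set ℕ) (i : ℕ) : Set ℕ := {x ∈ B | i < (B ∩ Set.Iic x).ncard}

/-- `p_{B,i}`: the partition obtained from `p` by splitting the block `B` into
the block of its `i` smallest elements and the block of its remaining elements. -/
def splitRel (p : ℕ → ℕ → Prop) (B : Set ℕ) (i : ℕ) : ℕ → ℕ → Prop :=
  fun x y => p x y ∧ ((x ∈ lowerPart B i ∧ y ∈ lowerPart B i) ∨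
    (x ∈ upperPart B i ∧ y ∈ upperPart B i) ∨ (x ∉ B ∧ y ∉ B))

/-- The `i`-th smallest element of `B` (1-indexed). -/
noncomputable def nthSmall (B : Set ℕ) (i : ℕ) : ℕ :=
  sInf {x | x ∈ B ∧ (B ∩ Set.Iic x).ncard = i}

open Set
open scoped Interval

section Partition

variable {S T : Set ℕ} {r q : ℕ → ℕ → Prop} {B : Set ℕ} {a b c c' s t u v w x y : ℕ}

theorem IsPartitionOn.symm (hr : IsPartitionOn S r) (h : r a b) : r b a := hr.1 a b h

theorem IsPartitionOn.trans (hr : IsPartitionOn S r) (h₁ : r a b) (h₂ : r b c) : r a c :=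
  hr.2.1 a b c h₁ h₂

theorem IsPartitionOn.refl (hr : IsPartitionOn S r) (ha : a ∈ S) : r a a := (hr.2.2 a).2 ha

theorem IsPartitionOn.mem_left (hr : IsPartitionOn S r) (h : r a b) : a ∈ S :=
  (hr.2.2 a).1 (hr.trans h (hr.symm h))

theorem IsPartitionOn.mem_right (hr : IsPartitionOn S r) (h : r a b) : b ∈ S :=
  hr.mem_left (hr.symm h)

theorem IsBlock.rel (hr : IsPartitionOn S r) (hB : IsBlock r B) (hu : u ∈ B) (hv : v ∈ B) :
    r u v := by
  obtain ⟨i, -, rfl⟩ := hB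
  exact hr.trans (hr.symm hu) hv

theorem IsBlock.mem_of_rel (hr : IsPartitionOn S r) (hB : IsBlock r B) (hu : u ∈ B)
    (huv : r u v) : v ∈ B := by
  obtain ⟨i, -, rfl⟩ := hB
  exact hr.trans hu huv

theorem IsBlock.subset (hr : IsPartitionOn S r) (hB : IsBlock r B) : B ⊆ S :=
  fun _ hu => hr.mem_left (hB.rel hr hu hu)

theorem IsBlock.nonempty (hB : IsBlock r B) : B.Nonempty := by
  obtain ⟨i, hi, rfl⟩ := hB
  exact ⟨i, hi⟩

theorem isPartitionOn_mapRel {f : ℕ → ℕ} (hf : Function.Injective f) (hr : IsPartitionOn S r) :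
    IsPartitionOn (f '' S) (mapRel f r) := by
  refine ⟨?_, ?_, fun x => ⟨?_, ?_⟩⟩
  · rintro _ _ ⟨i, j, rfl, rfl, h⟩
    exact ⟨j, i, rfl, rfl, hr.symm h⟩
  · rintro _ _ _ ⟨i, j, rfl, rfl, h₁⟩ ⟨j', k, hj, rfl, h₂⟩
    obtain rfl := hf hj
    exact ⟨i, k, rfl, rfl, hr.trans h₁ h₂⟩
  · rintro ⟨i, j, rfl, -, h⟩
    exact ⟨i, hr.mem_left h, rfl⟩
  · rintro ⟨i, hi, rfl⟩
    exact ⟨i, i, rfl, rfl, hr.refl hi⟩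

theorem isPartitionOn_relJoin (hr : IsPartitionOn S r) (hq : IsPartitionOn T q)
    (hST : Disjoint S T) : IsPartitionOn (S ∪ T) (relJoin r q) := by
  refine ⟨fun a b h => h.imp hr.symm hq.symm, fun a b c h₁ h₂ => ?_, fun a => ?_⟩
  · rcases h₁ with h₁ | h₁ <;> rcases h₂ with h₂ | h₂
    · exact Or.inl (hr.trans h₁ h₂)
    · exact (hST.notMem_of_mem_left (hr.mem_right h₁) (hq.mem_left h₂)).elim
    · exact (hST.notMem_of_mem_left (hr.mem_left h₂) (hq.mem_right h₁)).elim
    · exact Or.inr (hq.trans h₁ h₂)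
  · exact or_congr (hr.2.2 a) (hq.2.2 a)

theorem NonCrossing.rel_or_rel (hnc : NonCrossing r) (hsymm : ∀ a b, r a b → r b a)
    (huw : r u w) (hst : r s t) (hs : s ∈ Ioo u w) (ht : t ∉ Icc u w) : r t u ∨ r u s := by
  rw [mem_Ioo] at hs
  rw [mem_Icc, not_and_or, not_le, not_le] at ht
  rcases ht with ht | ht
  · exact Or.inl (hnc t u s w ht hs.1 hs.2 (hsymm _ _ hst) huw)
  · exact Or.inr (hnc u s w t hs.1 hs.2 ht huw hst)

theorem NonCrossing.mem_Ioo_of_rel (hr : IsPartitionOn S r) (hnc : NonCrossing r) (huw : r u w)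
    (hst : r s t) (hs : s ∈ Ioo u w) (hus : ¬ r u s) : t ∈ Ioo u w := by
  have htu : ¬ r t u := fun h => hus (hr.symm (hr.trans hst h))
  by_contra ht
  have htw : t ≠ w := by rintro rfl; exact htu (hr.symm huw)
  have htu' : t ≠ u := by rintro rfl; exact hus (hr.symm hst)
  have ht' : t ∉ Icc u w := by
    rw [mem_Icc]
    rw [mem_Ioo] at ht
    omega
  exact (hnc.rel_or_rel (fun _ _ => hr.symm) huw hst hs ht').elim htu hus

theorem NonCrossing.mem_uIoc_iff (hr : IsPartitionOn S r) (hnc : NonCrossing r) (hxy : r x y)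
    (hcc : r c c') (hxc : ¬ r x c) : c ∈ Ι x y ↔ c' ∈ Ι x y := by
  have key : ∀ {x y c c'}, r x y → r c c' → ¬ r x c → x ≤ y → c ∈ Ioc x y → c' ∈ Ioc x y := by
    intro x y c c' hxy hcc hxc hle hc
    have hcy : c ≠ y := by rintro rfl; exact hxc hxy
    have := hnc.mem_Ioo_of_rel hr hxy hcc ⟨hc.1, lt_of_le_of_ne hc.2 hcy⟩ hxc
    exact ⟨this.1, this.2.le⟩
  have hxc' : ¬ r x c' := fun h => hxc (hr.trans h (hr.symm hcc))
  have hyx := hr.symm hxy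
  rcases le_total x y with hle | hle
  · rw [uIoc_of_le hle]
    exact ⟨key hxy hcc hxc hle, key hxy (hr.symm hcc) hxc' hle⟩
  · rw [uIoc_of_ge hle]
    exact ⟨key hyx hcc (fun h => hxc (hr.trans hxy h)) hle,
      key hyx (hr.symm hcc) (fun h => hxc' (hr.trans hxy h)) hle⟩

end Partition

def Saturated (q : ℕ → ℕ → Prop) (S : Set ℕ) : Prop := ∀ a b, q a b → a ∈ S → b ∈ S

namespace Saturated

variable {q q' : ℕ → ℕ → Prop} {S T : Set ℕ} {a b : ℕ}

theorem mono (h : ∀ a b, q' a b → q a b) (hS : Saturated q S) : Saturated q' S :=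
  fun a b hab => hS a b (h a b hab)

theorem mem_iff (hsymm : ∀ a b, q a b → q b a) (hS : Saturated q S) (hab : q a b) :
    a ∈ S ↔ b ∈ S :=
  ⟨hS a b hab, hS b a (hsymm a b hab)⟩

theorem inter (hS : Saturated q S) (hT : Saturated q T) : Saturated q (S ∩ T) :=
  fun a b hab ha => ⟨hS a b hab ha.1, hT a b hab ha.2⟩

theorem union (hS : Saturated q S) (hT : Saturated q T) : Saturated q (S ∪ T) :=
  fun a b hab ha => ha.imp (hS a b hab) (hT a b hab)

theorem diff (hsymm : ∀ a b, q a b → q b a) (hS : Saturated q S) (hT : Saturated q T) :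
    Saturated q (S \ T) :=
  fun a b hab ha => ⟨hS a b hab ha.1, fun hb => ha.2 (hT b a (hsymm a b hab) hb)⟩

end Saturated

theorem saturated_uIoc_self (q : ℕ → ℕ → Prop) (x : ℕ) : Saturated q (Ι x x) := by
  intro a b _ ha
  simp at ha

theorem saturated_uIoc_trans {q : ℕ → ℕ → Prop} (hsymm : ∀ a b, q a b → q b a) {x y z : ℕ}
    (h₁ : Saturated q (Ι x y)) (h₂ : Saturated q (Ι y z)) : Saturated q (Ι x z) := by
  intro a b hab ha
  have h₁ := h₁.mem_iff hsymm hab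
  have h₂ := h₂.mem_iff hsymm hab
  simp only [mem_uIoc] at *
  omega

section Rank

variable {S : Set ℕ} {i x y : ℕ}

theorem ncard_inter_Iic_mono (hS : S.Finite) (hxy : x ≤ y) :
    (S ∩ Iic x).ncard ≤ (S ∩ Iic y).ncard :=
  ncard_le_ncard (inter_subset_inter_right _ (Iic_subset_Iic.2 hxy)) (hS.subset inter_subset_left)

theorem ncard_inter_Iic_lt (hS : S.Finite) (hy : y ∈ S) (hxy : x < y) :
    (S ∩ Iic x).ncard < (S ∩ Iic y).ncard := by
  refine ncard_lt_ncard ⟨inter_subset_inter_right _ (Iic_subset_Iic.2 hxy.le), fun h => ?_⟩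
    (hS.subset inter_subset_left)
  have := (h ⟨hy, mem_Iic.2 le_rfl⟩).2
  rw [mem_Iic] at this
  omega

theorem ncard_inter_Iic_le_iff (hS : S.Finite) (hy : y ∈ S) :
    (S ∩ Iic y).ncard ≤ (S ∩ Iic x).ncard ↔ y ≤ x := by
  refine ⟨fun h => ?_, ncard_inter_Iic_mono hS⟩
  by_contra hxy
  exact (ncard_inter_Iic_lt hS hy (not_le.1 hxy)).not_ge h

theorem one_le_ncard_inter_Iic (hS : S.Finite) (hx : x ∈ S) : 1 ≤ (S ∩ Iic x).ncard :=
  (ncard_pos (hS.subset inter_subset_left)).2 ⟨x, hx, mem_Iic.2 le_rfl⟩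

theorem ncard_inter_Iic_le_ncard (hS : S.Finite) : (S ∩ Iic x).ncard ≤ S.ncard :=
  ncard_le_ncard inter_subset_left hS

theorem nthSmall_spec (hS : S.Finite) (hi : 1 ≤ i) (hiS : i ≤ S.ncard) :
    nthSmall S i ∈ S ∧ (S ∩ Iic (nthSmall S i)).ncard = i := by
  have hrank : ∀ k ∈ Icc 1 S.ncard, ∃ x ∈ S, k = (S ∩ Iic x).ncard := by
    have := surj_on_of_inj_on_of_ncard_le (s := S) (t := Icc 1 S.ncard)
      (fun x _ => (S ∩ Iic x).ncard)
      (fun x hx => ⟨one_le_ncard_inter_Iic hS hx, ncard_inter_Iic_le_ncard hS⟩)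
      (fun x y hx hy h => le_antisymm ((ncard_inter_Iic_le_iff hS hx).1 h.le)
        ((ncard_inter_Iic_le_iff hS hy).1 h.ge)) (by simp)
    simpa using this
  obtain ⟨x, hx, hxi⟩ := hrank i ⟨hi, hiS⟩
  exact Nat.sInf_mem (s := {x | x ∈ S ∧ (S ∩ Iic x).ncard = i}) ⟨x, hx, hxi.symm⟩

theorem le_nthSmall_iff (hS : S.Finite) (hx : x ∈ S) (hi : 1 ≤ i) (hiS : i ≤ S.ncard) :
    x ≤ nthSmall S i ↔ (S ∩ Iic x).ncard ≤ i := by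
  rw [← ncard_inter_Iic_le_iff hS hx, (nthSmall_spec hS hi hiS).2]

theorem nthSmall_le_iff (hS : S.Finite) (hi : 1 ≤ i) (hiS : i ≤ S.ncard) :
    nthSmall S i ≤ x ↔ i ≤ (S ∩ Iic x).ncard := by
  obtain ⟨hmem, hrank⟩ := nthSmall_spec hS hi hiS
  rw [← ncard_inter_Iic_le_iff hS hmem, hrank]

theorem nthSmall_one_le (hS : S.Finite) (hx : x ∈ S) : nthSmall S 1 ≤ x :=
  (nthSmall_le_iff hS le_rfl ((one_le_ncard_inter_Iic hS hx).trans
    (ncard_inter_Iic_le_ncard hS))).2 (one_le_ncard_inter_Iic hS hx)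

theorem le_nthSmall_ncard (hS : S.Finite) (hx : x ∈ S) : x ≤ nthSmall S S.ncard :=
  (le_nthSmall_iff hS hx ((one_le_ncard_inter_Iic hS hx).trans (ncard_inter_Iic_le_ncard hS))
    le_rfl).2 (ncard_inter_Iic_le_ncard hS)

theorem le_nthSmall_or_nthSmall_succ_le (hS : S.Finite) (hx : x ∈ S) (hi : 1 ≤ i)
    (hiS : i + 1 ≤ S.ncard) : x ≤ nthSmall S i ∨ nthSmall S (i + 1) ≤ x := by
  rw [le_nthSmall_iff hS hx hi (by omega), nthSmall_le_iff hS (by omega) hiS]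
  omega

theorem nthSmall_mem_lowerPart {j : ℕ} (hS : S.Finite) (hj : 1 ≤ j) (hji : j ≤ i)
    (hiS : i ≤ S.ncard) : nthSmall S j ∈ lowerPart S i := by
  obtain ⟨hmem, hrank⟩ := nthSmall_spec hS hj (hji.trans hiS)
  exact ⟨hmem, hrank.le.trans hji⟩

theorem nthSmall_mem_upperPart {j : ℕ} (hS : S.Finite) (hij : i < j) (hjS : j ≤ S.ncard) :
    nthSmall S j ∈ upperPart S i := by
  obtain ⟨hmem, hrank⟩ := nthSmall_spec hS (by omega) hjS
  exact ⟨hmem, hrank.symm ▸ hij⟩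

end Rank

section Depth

variable {P : ℕ → ℕ → Prop} {X Y : Set ℕ}

/-- `depth P X` is by definition `sSup (chainLengths P X)`. -/
def chainLengths (P : ℕ → ℕ → Prop) (X : Set ℕ) : Set ℕ :=
  {m : ℕ | ∃ c : ℕ → Set ℕ, c 1 = X ∧
    (∀ i, 1 ≤ i → i ≤ m → IsBlock P (c i)) ∧
    (∀ i, 1 ≤ i → i < m → Nested (c i) (c (i + 1)))}

/-- Along a `⪯`-chain the least elements strictly decrease. -/
theorem le_of_mem_chainLengths {m : ℕ} (hm : m ∈ chainLengths P X) : m ≤ sInf X + 1 := by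
  obtain ⟨c, rfl, -, hnest⟩ := hm
  have key : ∀ j, j + 1 < m → sInf (c (j + 2)) + j < sInf (c 1) := by
    intro j
    induction j with
    | zero => intro hj; exact (hnest 1 le_rfl hj).1
    | succ j ih =>
      intro hj
      have h := (hnest (j + 2) (by omega) (by omega)).1
      rw [show j + 2 + 1 = j + 1 + 2 by omega] at h
      have := ih (by omega)
      omega
  rcases Nat.lt_or_ge m 2 with hm | hm
  · omega
  · have := key (m - 2) (by omega)
    omega

theorem depth_lt_of_nested (hX : IsBlock P X) (hY : IsBlock P Y) (hN : Nested Y X) :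
    depth P X < depth P Y := by
  have hbdd : ∀ Z, BddAbove (chainLengths P Z) :=
    fun Z => ⟨sInf Z + 1, fun _ hm => le_of_mem_chainLengths hm⟩
  obtain ⟨c, hc1, hblock, hnest⟩ : depth P X ∈ chainLengths P X :=
    Nat.sSup_mem ⟨1, fun _ => X, rfl, fun _ _ _ => hX, fun _ _ _ => by omega⟩ (hbdd X)
  have hprepend : depth P X + 1 ∈ chainLengths P Y := by
    refine ⟨fun j => if j ≤ 1 then Y else c (j - 1), by simp, fun j hj1 hj => ?_,
      fun j hj1 hj => ?_⟩
    · dsimp only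
      split_ifs with h
      · exact hY
      · exact hblock (j - 1) (by omega) (by omega)
    · rcases Nat.lt_or_ge 1 j with h | h
      · simp only [if_neg (show ¬ j ≤ 1 by omega), if_neg (show ¬ j + 1 ≤ 1 by omega)]
        simpa [show j - 1 + 1 = j by omega] using hnest (j - 1) (by omega) (by omega)
      · obtain rfl : j = 1 := by omega
        simpa [hc1] using hN
  exact Nat.lt_of_succ_le (le_csSup (hbdd Y) hprepend)

theorem nested_of_forall_mem_Ioo (hX : X.Finite) (hY : Y.Finite) (hYne : Y.Nonempty) {u v : ℕ}
    (hu : u ∈ X) (hv : v ∈ X) (h : ∀ y ∈ Y, y ∈ Ioo u v) : Nested Y X :=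
  ⟨(Nat.sInf_le hu).trans_lt (h _ (Nat.sInf_mem hYne)).1,
    (h _ (hYne.csSup_mem hY)).2.trans_le (le_csSup hX.bddAbove hv)⟩

end Depth

section Merge

variable {S X Y : Set ℕ} {P : ℕ → ℕ → Prop} {a b s t u w : ℕ}

theorem mergeRel_symm (hP : IsPartitionOn S P) (h : mergeRel P X Y a b) : mergeRel P X Y b a :=
  h.imp hP.symm fun ⟨ha, hb, ha', hb'⟩ => ⟨hb, ha, hb', ha'⟩

theorem mem_union_iff_of_mergeRel (hP : IsPartitionOn S P) (hX : IsBlock P X)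
    (hY : IsBlock P Y) (h : mergeRel P X Y a b) : a ∈ X ∪ Y ↔ b ∈ X ∪ Y := by
  rcases h with h | ⟨-, -, ha, hb⟩
  · exact ⟨Or.imp (hX.mem_of_rel hP · h) (hY.mem_of_rel hP · h),
      Or.imp (hX.mem_of_rel hP · (hP.symm h)) (hY.mem_of_rel hP · (hP.symm h))⟩
  · exact iff_of_true ha hb

theorem Adjacent.symm (hadj : Adjacent P X Y) : Adjacent P Y X := by
  obtain ⟨hX, hY, hne, hnc⟩ := hadj
  refine ⟨hY, hX, hne.symm, ?_⟩
  have : mergeRel P Y X = mergeRel P X Y := by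
    unfold mergeRel
    simp only [union_comm Y X]
  rwa [this]

theorem Adjacent.mem_Ioo_of_rel (hP : IsPartitionOn S P) (hadj : Adjacent P X Y)
    (hu : u ∈ X ∪ Y) (hw : w ∈ X ∪ Y) (hs : s ∉ X ∪ Y) (hst : P s t) (hsuw : s ∈ Ioo u w) :
    t ∈ Ioo u w := by
  obtain ⟨hX, hY, -, hnc⟩ := hadj
  have hmem : ∀ {c}, c ∈ X ∪ Y → P c c := by
    rintro c (hc | hc)
    · exact hX.rel hP hc hc
    · exact hY.rel hP hc hc
  have ht : t ∉ X ∪ Y := fun ht => hs ((mem_union_iff_of_mergeRel hP hX hY (Or.inl hst)).2 ht)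
  by_contra htuw
  have htuw' : t ∉ Icc u w := by
    have : t ≠ u := fun h => ht (h ▸ hu)
    have : t ≠ w := fun h => ht (h ▸ hw)
    rw [mem_Ioo] at htuw
    rw [mem_Icc]
    omega
  rcases hnc.rel_or_rel (fun _ _ => mergeRel_symm hP) (Or.inr ⟨hmem hu, hmem hw, hu, hw⟩)
      (Or.inl hst) hsuw htuw' with h | h
  · exact ht ((mem_union_iff_of_mergeRel hP hX hY h).2 hu)
  · exact hs ((mem_union_iff_of_mergeRel hP hX hY h).1 hu)

end Merge

section Kreweras

variable {n : ℕ} {p q : ℕ → ℕ → Prop} {a b c c' u w x y : ℕ}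

/-- The odd position `2a - 1` lies between the even positions `2x` and `2y` iff `a ∈ Ι x y`. -/
theorem Kmap_iff (hq : ∀ a b, q a b → a ∈ Idx n ∧ b ∈ Idx n) :
    Kmap n q x y ↔ x ∈ Idx n ∧ y ∈ Idx n ∧ Saturated q (Ι x y) := by
  constructor
  · rintro ⟨hx, hy, -, -, hall⟩
    simp only [Idx, mem_Icc, evenPos] at hx hy
    refine ⟨⟨by omega, by omega⟩, ⟨by omega, by omega⟩, fun a b hab ha => ?_⟩
    obtain ⟨⟨ha₁, -⟩, hb₁, -⟩ := hq a b hab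
    by_contra hb
    refine hall (oddPos a) (oddPos b) ⟨a, (hq a b hab).1, rfl⟩ ⟨b, (hq a b hab).2, rfl⟩
      ?_ ?_ ⟨a, b, rfl, rfl, hab⟩ <;>
    · simp only [Between, oddPos, evenPos, mem_uIoc] at ha hb ⊢
      omega
  · rintro ⟨hx, hy, hsat⟩
    simp only [Idx, mem_Icc] at hx hy
    refine ⟨?_, ?_, ?_, ?_, ?_⟩
    · simp only [Idx, mem_Icc, evenPos]; omega
    · simp only [Idx, mem_Icc, evenPos]; omega
    · rintro ⟨c, -, hc⟩; simp only [oddPos, evenPos] at hc; omega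
    · rintro ⟨c, -, hc⟩; simp only [oddPos, evenPos] at hc; omega
    · rintro _ _ ⟨a, ha, rfl⟩ ⟨b, -, rfl⟩ hbet hnbet ⟨a', b', ha', hb', hab⟩
      simp only [Idx, mem_Icc] at ha
      have := hq a' b' hab
      simp only [Idx, mem_Icc] at this
      simp only [oddPos] at ha' hb'
      obtain rfl : a' = a := by omega
      obtain rfl : b' = b := by omega
      have := hsat a' b' hab
      simp only [Between, oddPos, evenPos, mem_uIoc] at this hbet hnbet
      omega

theorem Kmap_iff_of_isPartitionOn (hp : IsPartitionOn (Idx n) p) :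
    Kmap n p x y ↔ x ∈ Idx n ∧ y ∈ Idx n ∧ Saturated p (Ι x y) :=
  Kmap_iff fun _ _ h => ⟨hp.mem_left h, hp.mem_right h⟩

theorem isPartitionOn_Kmap (hp : IsPartitionOn (Idx n) p) : IsPartitionOn (Idx n) (Kmap n p) := by
  simp only [IsPartitionOn, Kmap_iff_of_isPartitionOn hp]
  refine ⟨fun x y ⟨hx, hy, h⟩ => ⟨hy, hx, uIoc_comm x y ▸ h⟩,
    fun x y z ⟨hx, _, h₁⟩ ⟨_, hz, h₂⟩ => ⟨hx, hz, saturated_uIoc_trans (fun _ _ => hp.symm) h₁ h₂⟩,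
    fun x => ⟨fun h => h.1, fun hx => ⟨hx, hx, saturated_uIoc_self p x⟩⟩⟩

theorem nonCrossing_Kmap (hp : IsPartitionOn (Idx n) p) : NonCrossing (Kmap n p) := by
  intro i j k l hij hjk hkl hik hjl
  rw [Kmap_iff_of_isPartitionOn hp] at *
  refine ⟨hik.1, hjl.1, ?_⟩
  have h := hik.2.2.diff (fun _ _ => hp.symm) hjl.2.2
  convert h using 1
  ext a
  simp only [mem_uIoc, mem_sdiff]
  omega

theorem Kmap_mem_Ico_iff (hp : IsPartitionOn (Idx n) p) (huw : p u w) (hcc : Kmap n p c c') :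
    c ∈ Ico u w ↔ c' ∈ Ico u w := by
  have := ((Kmap_iff_of_isPartitionOn hp).1 hcc).2.2.mem_iff (fun _ _ => hp.symm) huw
  simp only [mem_Ico, mem_uIoc] at this ⊢
  omega

theorem Kmap_pred_of_rel (hp : IsPartitionOn (Idx n) p) (hnc : NonCrossing p) (huw : p u w)
    (hlt : u < w) (hgap : ∀ x, u < x → x < w → ¬ p u x) : Kmap n p u (w - 1) := by
  have hu := hp.mem_left huw
  have hw := hp.mem_right huw
  simp only [Idx, mem_Icc] at hu hw
  refine (Kmap_iff_of_isPartitionOn hp).2 ⟨⟨hu.1, hu.2⟩, ⟨by omega, by omega⟩, fun d g hdg hd => ?_⟩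
  rw [uIoc_of_le (by omega), mem_Ioc] at hd ⊢
  have := hnc.mem_Ioo_of_rel hp huw hdg ⟨hd.1, by omega⟩ (hgap d hd.1 (by omega))
  rw [mem_Ioo] at this
  omega

theorem Kmap_pred_of_forall_rel (hp : IsPartitionOn (Idx n) p) (hnc : NonCrossing p)
    (huw : p u w) (hu : 2 ≤ u) (hblock : ∀ x, p u x → u ≤ x ∧ x ≤ w) : Kmap n p w (u - 1) := by
  have huw' := hblock w huw
  have hu' := hp.mem_left huw
  have hw := hp.mem_right huw
  simp only [Idx, mem_Icc] at hu' hw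
  refine (Kmap_iff_of_isPartitionOn hp).2 ⟨⟨hw.1, hw.2⟩, ⟨by omega, by omega⟩, fun d g hdg hd => ?_⟩
  rw [uIoc_of_ge (by omega), mem_Ioc] at hd ⊢
  by_cases hud : p u d
  · have := hblock g (hp.trans hud hdg)
    omega
  · have hdu : d ≠ u := by rintro rfl; exact hud (hp.refl (hp.mem_left huw))
    have hdw : d ≠ w := by rintro rfl; exact hud huw
    have := hnc.mem_Ioo_of_rel hp huw hdg ⟨by omega, by omega⟩ hud
    rw [mem_Ioo] at this
    omega

/-- Cyclic counterpart of `Kmap_pred_of_forall_rel`: the point before `1` is `n`. -/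
theorem Kmap_last_of_forall_rel (hp : IsPartitionOn (Idx n) p) (hnc : NonCrossing p)
    (hw : p 1 w) (hblock : ∀ x, p 1 x → x ≤ w) : Kmap n p w n := by
  have hw' := hp.mem_right hw
  simp only [Idx, mem_Icc] at hw'
  refine (Kmap_iff_of_isPartitionOn hp).2 ⟨⟨hw'.1, hw'.2⟩, ⟨by omega, le_rfl⟩, fun d g hdg hd => ?_⟩
  rw [uIoc_of_le hw'.2, mem_Ioc] at hd ⊢
  have hg := hp.mem_right hdg
  simp only [Idx, mem_Icc] at hg
  refine ⟨?_, hg.2⟩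
  by_contra hgw
  have h1d : ¬ p 1 d := fun h => by have := hblock d h; omega
  have h1g : ¬ p 1 g := fun h => h1d (hp.trans h (hp.symm hdg))
  have hg1 : g ≠ 1 := by rintro rfl; exact h1g (hp.refl (hp.mem_left hw))
  have hgw : g ≠ w := by rintro rfl; exact h1g hw
  have := hnc.mem_Ioo_of_rel hp hw (hp.symm hdg) ⟨by omega, by omega⟩ h1g
  rw [mem_Ioo] at this
  omega

/-- Let `a'` be the last element of the block of `a` before `b`. The class of `a'` in `K(p)`
leaves `[a, b)`: it contains the point before the next element of the block, if there is one,
and otherwise the point before the least element of the block. -/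
theorem exists_Kmap_of_not_rel (hp : IsPartitionOn (Idx n) p) (hnc : NonCrossing p)
    (ha : a ∈ Idx n) (hb : b ∈ Idx n) (hab : a < b) (h : ¬ p a b) :
    ∃ e f, Kmap n p e f ∧ e ∈ Ico a b ∧ f ∉ Ico a b := by
  classical
  set a' := Nat.findGreatest (p a) (b - 1) with ha'
  have haa' : p a a' := Nat.findGreatest_spec (m := a) (by omega) (hp.refl ha)
  have hle : a ≤ a' := Nat.le_findGreatest (by omega) (hp.refl ha)
  have hlt : a' < b := by have := Nat.findGreatest_le (P := p a) (b - 1); omega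
  have hbetween : ∀ x, a' < x → x ≤ b → ¬ p a x := fun x h₁ h₂ =>
    if hxb : x = b then hxb ▸ h else Nat.findGreatest_is_greatest h₁ (by omega)
  by_cases hnext : ∃ x, a' < x ∧ p a x
  · obtain ⟨h₁, h₂⟩ := Nat.find_spec hnext
    have hgap : ∀ x, a' < x → x < Nat.find hnext → ¬ p a' x := fun x hx₁ hx₂ hx =>
      Nat.find_min hnext hx₂ ⟨hx₁, hp.trans haa' hx⟩
    have hfb : b < Nat.find hnext := by
      by_contra! hfb
      exact hbetween _ h₁ hfb h₂
    exact ⟨a', Nat.find hnext - 1,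
      Kmap_pred_of_rel hp hnc (hp.trans (hp.symm haa') h₂) h₁ hgap, ⟨hle, hlt⟩,
      by rw [mem_Ico]; omega⟩
  push Not at hnext
  have hmin : ∃ x, p a x := ⟨a, hp.refl ha⟩
  have ha₀ : p a (Nat.find hmin) := Nat.find_spec hmin
  have ha₀a : Nat.find hmin ≤ a := Nat.find_min' hmin (hp.refl ha)
  have hblock : ∀ x, p (Nat.find hmin) x → Nat.find hmin ≤ x ∧ x ≤ a' := fun x hx =>
    ⟨Nat.find_min' hmin (hp.trans ha₀ hx), not_lt.1 fun h' => hnext x h' (hp.trans ha₀ hx)⟩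
  have ha₀' := hp.mem_right ha₀
  have hb' := hb
  simp only [Idx, mem_Icc] at ha₀' hb'
  rcases Nat.lt_or_ge 1 (Nat.find hmin) with h₁ | h₁
  · refine ⟨a', Nat.find hmin - 1, Kmap_pred_of_forall_rel hp hnc (hp.trans (hp.symm ha₀) haa')
      h₁ hblock, ⟨hle, hlt⟩, by rw [mem_Ico]; omega⟩
  · obtain h1 : Nat.find hmin = 1 := by omega
    rw [h1] at ha₀ hblock
    refine ⟨a', n, Kmap_last_of_forall_rel hp hnc (hp.trans (hp.symm ha₀) haa')
      (fun x hx => (hblock x hx).2), ⟨hle, hlt⟩, by rw [mem_Ico]; omega⟩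

end Kreweras

section Circ

variable {n i : ℕ} {p : ℕ → ℕ → Prop} {B C : Set ℕ} {a b c : ℕ}

theorem oddPos_injective : Function.Injective oddPos := fun a b h => by
  simp only [oddPos] at h
  omega

theorem evenPos_injective : Function.Injective evenPos := fun a b h => by
  simp only [evenPos] at h
  omega

theorem isPartitionOn_pCirc (hp : IsPartitionOn (Idx n) p) :
    IsPartitionOn (oddPos '' Idx n ∪ evenPos '' Idx n) (pCirc n p) :=
  isPartitionOn_relJoin (isPartitionOn_mapRel oddPos_injective hp)
    (isPartitionOn_mapRel evenPos_injective (isPartitionOn_Kmap hp))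
    (disjoint_left.2 fun _ ⟨a, ha, h₁⟩ ⟨b, _, h₂⟩ => by
      simp only [Idx, mem_Icc, oddPos, evenPos] at ha h₁ h₂
      omega)

theorem pCirc_oddPos (h : p a b) : pCirc n p (oddPos a) (oddPos b) := Or.inl ⟨a, b, rfl, rfl, h⟩

theorem pCirc_evenPos (h : Kmap n p a b) : pCirc n p (evenPos a) (evenPos b) :=
  Or.inr ⟨a, b, rfl, rfl, h⟩

theorem oddPos_mem_union_iff (ha : 1 ≤ a) : oddPos a ∈ oddPos '' B ∪ evenPos '' C ↔ a ∈ B := by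
  refine ⟨?_, fun h => Or.inl ⟨a, h, rfl⟩⟩
  rintro (⟨b, hb, h⟩ | ⟨c, -, h⟩) <;> simp only [oddPos, evenPos] at h
  · obtain rfl : b = a := by omega
    exact hb
  · omega

theorem evenPos_mem_union_iff (hB : B ⊆ Idx n) :
    evenPos c ∈ oddPos '' B ∪ evenPos '' C ↔ c ∈ C := by
  refine ⟨?_, fun h => Or.inr ⟨c, h, rfl⟩⟩
  rintro (⟨b, hb, h⟩ | ⟨c', hc', h⟩)
  · have := (hB hb).1
    simp only [oddPos, evenPos] at h
    omega
  · exact evenPos_injective h ▸ hc'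

theorem depth_lt_of_mem_Ico (hp : IsPartitionOn (Idx n) p) (hB : IsBlock p B)
    (hC : IsBlock (Kmap n p) C) (hB' : IsBlock (pCirc n p) (oddPos '' B))
    (hC' : IsBlock (pCirc n p) (evenPos '' C)) (hc : c ∈ C)
    (hcB : c ∈ Ico (nthSmall B 1) (nthSmall B B.ncard)) :
    depth (pCirc n p) (oddPos '' B) < depth (pCirc n p) (evenPos '' C) := by
  have hK := isPartitionOn_Kmap hp
  have hBfin : B.Finite := (finite_Icc 1 n).subset (hB.subset hp)
  have hr : 1 ≤ B.ncard := (ncard_pos hBfin).2 hB.nonempty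
  have hb₁ := (nthSmall_spec hBfin le_rfl hr).1
  have hbᵣ := (nthSmall_spec hBfin hr le_rfl).1
  have hb₁pos := (hB.subset hp hb₁).1
  refine depth_lt_of_nested hB' hC' (nested_of_forall_mem_Ioo (hBfin.image _)
    (((finite_Icc 1 n).subset (hC.subset hK)).image _) (hC.nonempty.image _)
    (mem_image_of_mem _ hb₁) (mem_image_of_mem _ hbᵣ) ?_)
  rintro _ ⟨c', hc', rfl⟩
  have := (Kmap_mem_Ico_iff hp (hB.rel hp hb₁ hbᵣ) (hC.rel hK hc hc')).1 hcB
  simp only [mem_Ico, mem_Ioo, oddPos, evenPos] at this ⊢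
  omega

theorem depth_lt_of_mem_Ioc (hp : IsPartitionOn (Idx n) p) (hC : IsBlock (Kmap n p) C)
    (hB : IsBlock p B) (hC' : IsBlock (pCirc n p) (evenPos '' C))
    (hB' : IsBlock (pCirc n p) (oddPos '' B)) (ha : a ∈ B)
    (haC : a ∈ Ioc (nthSmall C 1) (nthSmall C C.ncard)) :
    depth (pCirc n p) (evenPos '' C) < depth (pCirc n p) (oddPos '' B) := by
  have hK := isPartitionOn_Kmap hp
  have hCfin : C.Finite := (finite_Icc 1 n).subset (hC.subset hK)
  have hm : 1 ≤ C.ncard := (ncard_pos hCfin).2 hC.nonempty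
  have hc₁ := (nthSmall_spec hCfin le_rfl hm).1
  have hcₘ := (nthSmall_spec hCfin hm le_rfl).1
  have hsat := ((Kmap_iff_of_isPartitionOn hp).1 (hC.rel hK hc₁ hcₘ)).2.2
  rw [uIoc_of_le (nthSmall_one_le hCfin hcₘ)] at hsat
  refine depth_lt_of_nested hC' hB' (nested_of_forall_mem_Ioo (hCfin.image _)
    (((finite_Icc 1 n).subset (hB.subset hp)).image _) (hB.nonempty.image _)
    (mem_image_of_mem _ hc₁) (mem_image_of_mem _ hcₘ) ?_)
  rintro _ ⟨a', ha', rfl⟩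
  have := hsat a a' (hB.rel hp ha ha') haC
  simp only [mem_Ioc, mem_Ioo, oddPos, evenPos] at this ⊢
  omega

theorem nthSmall_ncard_mem_of_adjacent (hp : IsPartitionOn (Idx n) p) (hB : IsBlock p B)
    (hC : IsBlock (Kmap n p) C) (hadj : Adjacent (pCirc n p) (oddPos '' B) (evenPos '' C))
    (hdep : depth (pCirc n p) (evenPos '' C) ≤ depth (pCirc n p) (oddPos '' B)) :
    nthSmall B B.ncard ∈ C := by
  have hK := isPartitionOn_Kmap hp
  have hBfin : B.Finite := (finite_Icc 1 n).subset (hB.subset hp)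
  have hr : 1 ≤ B.ncard := (ncard_pos hBfin).2 hB.nonempty
  have hbᵣ := (nthSmall_spec hBfin hr le_rfl).1
  have hb₁ᵣ := nthSmall_one_le hBfin hbᵣ
  obtain ⟨c, hc⟩ := hC.nonempty
  have hout : c < nthSmall B 1 ∨ nthSmall B B.ncard ≤ c := by
    by_contra! hin
    exact hdep.not_gt (depth_lt_of_mem_Ico hp hB hC hadj.1 hadj.2.1 hc ⟨hin.1, hin.2⟩)
  refine hC.mem_of_rel hK hc ((Kmap_iff_of_isPartitionOn hp).2
    ⟨hC.subset hK hc, hB.subset hp hbᵣ, fun a d had ha => ?_⟩)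
  simp only [mem_uIoc] at ha ⊢
  by_cases haB : a ∈ B
  · have := nthSmall_one_le hBfin (hB.mem_of_rel hp haB had)
    have := le_nthSmall_ncard hBfin (hB.mem_of_rel hp haB had)
    have := le_nthSmall_ncard hBfin haB
    omega
  have hs := (oddPos_mem_union_iff (C := C) (hp.mem_left had).1).not.2 haB
  have hab : a ≠ nthSmall B B.ncard := fun h => haB (h ▸ hbᵣ)
  rcases hout with hcb | hcb
  · have := hadj.mem_Ioo_of_rel (isPartitionOn_pCirc hp) (Or.inr ⟨c, hc, rfl⟩)
      (Or.inl ⟨_, hbᵣ, rfl⟩) hs (pCirc_oddPos had)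
      (by simp only [mem_Ioo, oddPos, evenPos]; omega)
    simp only [mem_Ioo, oddPos, evenPos] at this
    omega
  · have := hadj.mem_Ioo_of_rel (isPartitionOn_pCirc hp) (Or.inl ⟨_, hbᵣ, rfl⟩)
      (Or.inr ⟨c, hc, rfl⟩) hs (pCirc_oddPos had)
      (by simp only [mem_Ioo, oddPos, evenPos]; omega)
    simp only [mem_Ioo, oddPos, evenPos] at this
    omega

theorem nthSmall_mem_of_adjacent_of_between (hp : IsPartitionOn (Idx n) p) (hB : IsBlock p B)
    (hi : 1 ≤ i) (hir : i < B.ncard) (hC : IsBlock (Kmap n p) C)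
    (hadj : Adjacent (pCirc n p) (oddPos '' B) (evenPos '' C))
    (hpos : ∀ x ∈ evenPos '' C,
      oddPos (nthSmall B i) < x ∧ x < oddPos (nthSmall B (i + 1))) :
    nthSmall B i ∈ C := by
  have hK := isPartitionOn_Kmap hp
  have hBfin : B.Finite := (finite_Icc 1 n).subset (hB.subset hp)
  have hbi := (nthSmall_spec hBfin hi hir.le).1
  obtain ⟨c, hc⟩ := hC.nonempty
  have hcpos := hpos _ ⟨c, hc, rfl⟩
  have hbi₁ := (hB.subset hp hbi).1
  simp only [oddPos, evenPos] at hcpos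
  refine hC.mem_of_rel hK hc (hK.symm ((Kmap_iff_of_isPartitionOn hp).2
    ⟨hB.subset hp hbi, hC.subset hK hc, fun a d had ha => ?_⟩))
  rw [uIoc_of_le (by omega), mem_Ioc] at ha ⊢
  have ha₁ := (hp.mem_left had).1
  have haB : a ∉ B := fun haB => by
    have := le_nthSmall_or_nthSmall_succ_le hBfin haB hi hir
    omega
  have := hadj.mem_Ioo_of_rel (isPartitionOn_pCirc hp) (Or.inl ⟨_, hbi, rfl⟩)
    (Or.inr ⟨c, hc, rfl⟩) ((oddPos_mem_union_iff ha₁).not.2 haB) (pCirc_oddPos had)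
    (by simp only [mem_Ioo, oddPos, evenPos]; omega)
  simp only [mem_Ioo, oddPos, evenPos] at this
  omega

theorem rel_of_adjacent_of_lt (hp : IsPartitionOn (Idx n) p) (hnc : NonCrossing p)
    (hB : IsBlock p B) (hC : IsBlock (Kmap n p) C)
    (hadj : Adjacent (pCirc n p) (oddPos '' B) (evenPos '' C)) (ha : a ∈ B) (hc : c ∈ C)
    (hac : a < c) (hgap : ∀ e ∈ C, e ∉ Ico a c) : p a c := by
  have ha₁ := (hB.subset hp ha).1
  by_contra h
  obtain ⟨e, f, hef, he, hf⟩ := exists_Kmap_of_not_rel hp hnc (hB.subset hp ha)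
    (hC.subset (isPartitionOn_Kmap hp) hc) hac h
  have := hadj.mem_Ioo_of_rel (isPartitionOn_pCirc hp) (Or.inl ⟨a, ha, rfl⟩)
    (Or.inr ⟨c, hc, rfl⟩) ((evenPos_mem_union_iff (hB.subset hp)).not.2 fun heC => hgap e heC he)
    (pCirc_evenPos hef) (by rw [mem_Ico] at he; simp only [mem_Ioo, oddPos, evenPos]; omega)
  simp only [mem_Ioo, oddPos, evenPos] at this
  exact hf ⟨by omega, by omega⟩

theorem rel_of_adjacent_of_gt (hp : IsPartitionOn (Idx n) p) (hnc : NonCrossing p)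
    (hB : IsBlock p B) (hC : IsBlock (Kmap n p) C)
    (hadj : Adjacent (pCirc n p) (oddPos '' B) (evenPos '' C)) (ha : a ∈ B) (hc : c ∈ C)
    (hca : c < a) (hCsub : C ⊆ Ico c a) : p c a := by
  have hK := isPartitionOn_Kmap hp
  by_contra h
  obtain ⟨e, f, hef, he, hf⟩ :=
    exists_Kmap_of_not_rel hp hnc (hC.subset hK hc) (hB.subset hp ha) hca h
  have heC : e ∉ C := fun heC => hf (hCsub (hC.mem_of_rel hK heC hef))
  have hec : e ≠ c := fun h => heC (h ▸ hc)
  have := hadj.mem_Ioo_of_rel (isPartitionOn_pCirc hp) (Or.inr ⟨c, hc, rfl⟩)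
    (Or.inl ⟨a, ha, rfl⟩) ((evenPos_mem_union_iff (hB.subset hp)).not.2 heC)
    (pCirc_evenPos hef) (by rw [mem_Ico] at he; simp only [mem_Ioo, oddPos, evenPos]; omega)
  simp only [mem_Ioo, oddPos, evenPos] at this
  exact hf ⟨by omega, by omega⟩

theorem nthSmall_one_mem_of_adjacent (hp : IsPartitionOn (Idx n) p) (hnc : NonCrossing p)
    (hC : IsBlock (Kmap n p) C) (hB : IsBlock p B)
    (hadj : Adjacent (pCirc n p) (evenPos '' C) (oddPos '' B))
    (hdep : depth (pCirc n p) (oddPos '' B) ≤ depth (pCirc n p) (evenPos '' C)) :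
    nthSmall C 1 ∈ B := by
  have hCfin : C.Finite := (finite_Icc 1 n).subset (hC.subset (isPartitionOn_Kmap hp))
  have hm : 1 ≤ C.ncard := (ncard_pos hCfin).2 hC.nonempty
  have hc₁ := (nthSmall_spec hCfin le_rfl hm).1
  obtain ⟨a, ha⟩ := hB.nonempty
  refine hB.mem_of_rel hp ha ?_
  rcases lt_trichotomy a (nthSmall C 1) with hlt | heq | hgt
  · refine rel_of_adjacent_of_lt hp hnc hB hC hadj.symm ha hc₁ hlt fun e he he' => ?_
    have := nthSmall_one_le hCfin he
    rw [mem_Ico] at he'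
    omega
  · rw [← heq]
    exact hp.refl (hB.subset hp ha)
  · have hout : nthSmall C C.ncard < a := by
      by_contra! hin
      exact hdep.not_gt (depth_lt_of_mem_Ioc hp hC hB hadj.1 hadj.2.1 ha ⟨hgt, hin⟩)
    exact hp.symm (rel_of_adjacent_of_gt hp hnc hB hC hadj.symm ha hc₁ hgt fun e he =>
      ⟨nthSmall_one_le hCfin he, (le_nthSmall_ncard hCfin he).trans_lt hout⟩)

theorem nthSmall_succ_mem_of_adjacent_of_between (hp : IsPartitionOn (Idx n) p)
    (hnc : NonCrossing p) (hC : IsBlock (Kmap n p) C) (hi : 1 ≤ i) (hic : i < C.ncard)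
    (hB : IsBlock p B) (hadj : Adjacent (pCirc n p) (evenPos '' C) (oddPos '' B))
    (hpos : ∀ x ∈ oddPos '' B,
      evenPos (nthSmall C i) < x ∧ x < evenPos (nthSmall C (i + 1))) :
    nthSmall C (i + 1) ∈ B := by
  have hCfin : C.Finite := (finite_Icc 1 n).subset (hC.subset (isPartitionOn_Kmap hp))
  have hci₁ := (nthSmall_spec hCfin (by omega : 1 ≤ i + 1) hic).1
  obtain ⟨a, ha⟩ := hB.nonempty
  have hapos := hpos _ ⟨a, ha, rfl⟩
  simp only [oddPos, evenPos] at hapos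
  refine hB.mem_of_rel hp ha ?_
  rcases eq_or_lt_of_le (show a ≤ nthSmall C (i + 1) by omega) with heq | hlt
  · rw [← heq]
    exact hp.refl (hB.subset hp ha)
  · refine rel_of_adjacent_of_lt hp hnc hB hC hadj.symm ha hci₁ hlt fun e he he' => ?_
    have := le_nthSmall_or_nthSmall_succ_le hCfin he hi hic
    rw [mem_Ico] at he'
    omega

end Circ

section SplitMerge

variable {n i : ℕ} {p : ℕ → ℕ → Prop} {B C X Y T : Set ℕ} {l u x y : ℕ}

theorem splitRel_symm (hp : IsPartitionOn (Idx n) p) {a b : ℕ} (h : splitRel p B i a b) :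
    splitRel p B i b a :=
  ⟨hp.symm h.1, h.2.imp And.symm (Or.imp And.symm And.symm)⟩

theorem Saturated.of_splitRel (hp : IsPartitionOn (Idx n) p) (hB : IsBlock p B)
    (hT : Saturated (splitRel p B i) T) (hl : l ∈ lowerPart B i) (hu : u ∈ upperPart B i)
    (hlu : l ∈ T ↔ u ∈ T) : Saturated p T := by
  have hsymm : ∀ a b, splitRel p B i a b → splitRel p B i b a := fun _ _ => splitRel_symm hp
  have key : ∀ z ∈ B, z ∈ T ↔ l ∈ T := by
    intro z hz
    by_cases hzl : (B ∩ Iic z).ncard ≤ i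
    · exact hT.mem_iff hsymm ⟨hB.rel hp hz hl.1, Or.inl ⟨⟨hz, hzl⟩, hl⟩⟩
    · exact (hT.mem_iff hsymm ⟨hB.rel hp hz hu.1, Or.inr (Or.inl ⟨⟨hz, by omega⟩, hu⟩)⟩).trans
        hlu.symm
  intro a d had ha
  by_cases haB : a ∈ B
  · exact (key d (hB.mem_of_rel hp haB had)).2 ((key a haB).1 ha)
  · exact hT a d ⟨had, Or.inr (Or.inr ⟨haB, fun hd => haB (hB.mem_of_rel hp hd (hp.symm had))⟩)⟩ ha

theorem saturated_splitRel_Ioc (hp : IsPartitionOn (Idx n) p) (hnc : NonCrossing p)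
    (hB : IsBlock p B) (hi : 1 ≤ i) (hir : i < B.ncard) :
    Saturated (splitRel p B i) (Ioc (nthSmall B i) (nthSmall B B.ncard)) := by
  have hBfin : B.Finite := (finite_Icc 1 n).subset (hB.subset hp)
  have hbi := (nthSmall_spec hBfin hi hir.le).1
  have hbᵣ := (nthSmall_spec hBfin (by omega) le_rfl).1
  rintro a d ⟨had, hparts⟩ ⟨ha₁, ha₂⟩
  by_cases haB : a ∈ B
  · have hai : i < (B ∩ Iic a).ncard := by
      by_contra! h
      exact (le_nthSmall_iff hBfin haB hi hir.le).2 h |>.not_gt ha₁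
    obtain ⟨hdB, hdi⟩ : d ∈ upperPart B i := by
      rcases hparts with ⟨⟨-, h⟩, -⟩ | ⟨-, hd⟩ | ⟨h, -⟩
      · omega
      · exact hd
      · exact (h haB).elim
    refine ⟨?_, le_nthSmall_ncard hBfin hdB⟩
    by_contra! h
    have := (le_nthSmall_iff hBfin hdB hi hir.le).1 h
    omega
  · have hab : a ≠ nthSmall B B.ncard := fun h => haB (h ▸ hbᵣ)
    have := hnc.mem_Ioo_of_rel hp (hB.rel hp hbi hbᵣ) had ⟨ha₁, lt_of_le_of_ne ha₂ hab⟩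
      fun h => haB (hB.mem_of_rel hp hbi h)
    exact ⟨this.1, this.2.le⟩

/-- An interval saturated for `p_{B,i}` but not for `p` separates the two halves of `B`; it is
then cut into intervals saturated for `p` by the interval `(b_i, b_r]`. -/
theorem Kmap_of_saturated_splitRel (hp : IsPartitionOn (Idx n) p) (hnc : NonCrossing p)
    (hB : IsBlock p B) (hi : 1 ≤ i) (hir : i < B.ncard) (hx : x ∈ Idx n) (hy : y ∈ Idx n)
    (hxy : x ≤ y) (hS : Saturated (splitRel p B i) (Ioc x y))
    (hsep : ¬ (nthSmall B 1 ∈ Ioc x y ↔ nthSmall B (i + 1) ∈ Ioc x y)) :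
    (Kmap n p x (nthSmall B B.ncard) ∨ Kmap n p x (nthSmall B i)) ∧
      (Kmap n p y (nthSmall B B.ncard) ∨ Kmap n p y (nthSmall B i)) := by
  have hBfin : B.Finite := (finite_Icc 1 n).subset (hB.subset hp)
  have hb₁ := nthSmall_mem_lowerPart hBfin le_rfl hi hir.le
  have hbi := nthSmall_mem_lowerPart hBfin hi le_rfl hir.le
  have hbi₁ := nthSmall_mem_upperPart hBfin (lt_add_one i) hir
  have hbᵣ := nthSmall_mem_upperPart hBfin hir le_rfl
  have h₁i := nthSmall_one_le hBfin hbi.1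
  have hii₁ : nthSmall B i < nthSmall B (i + 1) := not_le.1 fun h => by
    have := (le_nthSmall_iff hBfin hbi₁.1 hi hir.le).1 h
    exact this.not_gt hbi₁.2
  have hi₁ᵣ := le_nthSmall_ncard hBfin hbi₁.1
  have hsymm : ∀ a b, splitRel p B i a b → splitRel p B i b a := fun _ _ => splitRel_symm hp
  have hlow := hS.mem_iff hsymm ⟨hB.rel hp hb₁.1 hbi.1, Or.inl ⟨hb₁, hbi⟩⟩
  have hup := hS.mem_iff hsymm ⟨hB.rel hp hbi₁.1 hbᵣ.1, Or.inr (Or.inl ⟨hbi₁, hbᵣ⟩)⟩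
  have hT := saturated_splitRel_Ioc hp hnc hB hi hir
  have hK : ∀ {z z'} (V : Set ℕ), z ∈ Idx n → z' ∈ Idx n → Ι z z' = V →
      Saturated (splitRel p B i) V → (nthSmall B 1 ∈ V ↔ nthSmall B (i + 1) ∈ V) →
      Kmap n p z z' := fun V hz hz' hV hsat hiff =>
    (Kmap_iff_of_isPartitionOn hp).2 ⟨hz, hz', hV ▸ hsat.of_splitRel hp hB hb₁ hbi₁ hiff⟩
  have hbi' := hB.subset hp hbi.1
  have hbᵣ' := hB.subset hp hbᵣ.1
  simp only [mem_Ioc] at hsep hlow hup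
  by_cases hb₁S : x < nthSmall B 1 ∧ nthSmall B 1 ≤ y
  · refine ⟨.inl (hK (Ioc x y ∪ Ioc (nthSmall B i) (nthSmall B B.ncard)) hx hbᵣ' ?_
      (hS.union hT) ?_), .inr (hK (Ioc x y ∩ Ioc (nthSmall B i) (nthSmall B B.ncard)) hy hbi' ?_
      (hS.inter hT) ?_)⟩
    all_goals
      first
      | (ext a; simp only [mem_uIoc, mem_union, mem_inter_iff, mem_Ioc]; omega)
      | (simp only [mem_union, mem_inter_iff, mem_Ioc]; omega)
  · refine ⟨.inr (hK (Ioc (nthSmall B i) (nthSmall B B.ncard) \ Ioc x y) hx hbi' ?_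
        (hT.diff hsymm hS) ?_),
      .inl (hK (Ioc x y \ Ioc (nthSmall B i) (nthSmall B B.ncard)) hy hbᵣ' ?_
        (hS.diff hsymm hT) ?_)⟩
    all_goals
      first
      | (ext a; simp only [mem_uIoc, mem_sdiff, mem_Ioc]; omega)
      | (simp only [mem_sdiff, mem_Ioc]; omega)

theorem saturated_splitRel_uIoc (hp : IsPartitionOn (Idx n) p) (hnc : NonCrossing p)
    (hB : IsBlock p B) (hi : 1 ≤ i) (hir : i < B.ncard)
    (hz : Kmap n p x (nthSmall B B.ncard) ∨ Kmap n p x (nthSmall B i)) :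
    Saturated (splitRel p B i) (Ι x (nthSmall B B.ncard)) := by
  have hBfin : B.Finite := (finite_Icc 1 n).subset (hB.subset hp)
  have hsymm : ∀ a b, splitRel p B i a b → splitRel p B i b a := fun _ _ => splitRel_symm hp
  have hsat : ∀ {z z'}, Kmap n p z z' → Saturated (splitRel p B i) (Ι z z') := fun h =>
    ((Kmap_iff_of_isPartitionOn hp).1 h).2.2.mono fun _ _ => And.left
  refine hz.elim hsat fun h => saturated_uIoc_trans hsymm (hsat h) ?_
  rw [uIoc_of_le (le_nthSmall_ncard hBfin (nthSmall_spec hBfin hi hir.le).1)]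
  exact saturated_splitRel_Ioc hp hnc hB hi hir

theorem Kmap_splitRel (hp : IsPartitionOn (Idx n) p) (hnc : NonCrossing p) (hB : IsBlock p B)
    (hi : 1 ≤ i) (hir : i < B.ncard) (hX : IsBlock (Kmap n p) X) (hbᵣ : nthSmall B B.ncard ∈ X)
    (hY : IsBlock (Kmap n p) Y) (hbi : nthSmall B i ∈ Y) :
    Kmap n (splitRel p B i) = mergeRel (Kmap n p) X Y := by
  have hK := isPartitionOn_Kmap hp
  have hBfin : B.Finite := (finite_Icc 1 n).subset (hB.subset hp)
  have hsymm : ∀ a b, splitRel p B i a b → splitRel p B i b a := fun _ _ => splitRel_symm hp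
  have hXY : ∀ z, Kmap n p z (nthSmall B B.ncard) ∨ Kmap n p z (nthSmall B i) → z ∈ X ∪ Y :=
    fun z hz => hz.imp (fun h => hX.mem_of_rel hK hbᵣ (hK.symm h))
      (fun h => hY.mem_of_rel hK hbi (hK.symm h))
  have hXY' : ∀ z ∈ X ∪ Y, z ∈ Idx n ∧ Saturated (splitRel p B i) (Ι z (nthSmall B B.ncard)) :=
    fun z hz => ⟨hz.elim (hX.subset hK ·) (hY.subset hK ·), saturated_splitRel_uIoc hp hnc hB hi
      hir (hz.imp (hX.rel hK · hbᵣ) (hY.rel hK · hbi))⟩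
  funext x y
  apply propext
  rw [Kmap_iff fun a b h => ⟨hp.mem_left h.1, hp.mem_right h.1⟩]
  constructor
  · rintro ⟨hx, hy, hS⟩
    by_cases hsep : nthSmall B 1 ∈ Ι x y ↔ nthSmall B (i + 1) ∈ Ι x y
    · exact .inl ((Kmap_iff_of_isPartitionOn hp).2 ⟨hx, hy, hS.of_splitRel hp hB
        (nthSmall_mem_lowerPart hBfin le_rfl hi hir.le)
        (nthSmall_mem_upperPart hBfin (lt_add_one i) hir) hsep⟩)
    refine .inr ⟨hK.refl hx, hK.refl hy, ?_⟩
    rcases le_total x y with hxy | hxy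
    · rw [uIoc_of_le hxy] at hS hsep
      obtain ⟨h₁, h₂⟩ := Kmap_of_saturated_splitRel hp hnc hB hi hir hx hy hxy hS hsep
      exact ⟨hXY x h₁, hXY y h₂⟩
    · rw [uIoc_of_ge hxy] at hS hsep
      obtain ⟨h₂, h₁⟩ := Kmap_of_saturated_splitRel hp hnc hB hi hir hy hx hxy hS hsep
      exact ⟨hXY x h₁, hXY y h₂⟩
  · rintro (hxy | ⟨-, -, hx, hy⟩)
    · obtain ⟨hx, hy, hS⟩ := (Kmap_iff_of_isPartitionOn hp).1 hxy
      exact ⟨hx, hy, hS.mono fun _ _ => And.left⟩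
    · obtain ⟨hx', hSx⟩ := hXY' x hx
      obtain ⟨hy', hSy⟩ := hXY' y hy
      exact ⟨hx', hy', saturated_uIoc_trans hsymm hSx (uIoc_comm y _ ▸ hSy)⟩

theorem saturated_mergeRel_iff {S : Set ℕ} (hp : IsPartitionOn S p) (hX : IsBlock p X)
    (hY : IsBlock p Y) (hx : x ∈ X) (hy : y ∈ Y) :
    Saturated (mergeRel p X Y) T ↔ Saturated p T ∧ (x ∈ T ↔ y ∈ T) := by
  have hxy : mergeRel p X Y x y := Or.inr ⟨hX.rel hp hx hx, hY.rel hp hy hy, Or.inl hx, Or.inr hy⟩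
  refine ⟨fun hT => ⟨hT.mono fun _ _ => Or.inl, hT.mem_iff (fun _ _ => mergeRel_symm hp) hxy⟩,
    fun ⟨hT, hiff⟩ => ?_⟩
  have key : ∀ z ∈ X ∪ Y, z ∈ T ↔ x ∈ T := by
    rintro z (hz | hz)
    · exact hT.mem_iff (fun _ _ => hp.symm) (hX.rel hp hz hx)
    · exact (hT.mem_iff (fun _ _ => hp.symm) (hY.rel hp hz hy)).trans hiff.symm
  rintro a b (hab | ⟨-, -, ha, hb⟩) haT
  · exact hT a b hab haT
  · exact (key b hb).2 ((key a ha).1 haT)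

theorem nthSmall_mem_uIoc_iff (hp : IsPartitionOn (Idx n) p) (hC : IsBlock (Kmap n p) C)
    (hi : 1 ≤ i) (hic : i < C.ncard) (hxy : Kmap n p x y) :
    (nthSmall C 1 ∈ Ι x y ↔ nthSmall C (i + 1) ∈ Ι x y) ↔
      (x ∈ lowerPart C i ∧ y ∈ lowerPart C i) ∨ (x ∈ upperPart C i ∧ y ∈ upperPart C i) ∨
        (x ∉ C ∧ y ∉ C) := by
  have hK := isPartitionOn_Kmap hp
  have hCfin : C.Finite := (finite_Icc 1 n).subset (hC.subset hK)
  have hc₁ := (nthSmall_spec hCfin le_rfl (by omega)).1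
  have hci₁ := (nthSmall_spec hCfin (by omega : 1 ≤ i + 1) hic).1
  by_cases hxC : x ∈ C
  · have hyC := hC.mem_of_rel hK hxC hxy
    have := nthSmall_one_le hCfin hxC
    have := nthSmall_one_le hCfin hyC
    have := nthSmall_le_iff hCfin (x := x) (by omega : 1 ≤ i + 1) hic
    have := nthSmall_le_iff hCfin (x := y) (by omega : 1 ≤ i + 1) hic
    simp only [lowerPart, upperPart, mem_sep_iff, hxC, hyC, mem_uIoc, true_and, not_true,
      and_false, or_false]
    omega
  · have hyC : y ∉ C := fun hyC => hxC (hC.mem_of_rel hK hyC (hK.symm hxy))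
    simp only [hxC, hyC, not_false_eq_true, and_self, or_true, iff_true]
    exact (nonCrossing_Kmap hp).mem_uIoc_iff hK hxy (hC.rel hK hc₁ hci₁)
      fun h => hxC (hC.mem_of_rel hK hc₁ (hK.symm h))

theorem splitRel_Kmap (hp : IsPartitionOn (Idx n) p) (hC : IsBlock (Kmap n p) C) (hi : 1 ≤ i)
    (hic : i < C.ncard) (hX : IsBlock p X) (hc₁ : nthSmall C 1 ∈ X) (hY : IsBlock p Y)
    (hci₁ : nthSmall C (i + 1) ∈ Y) :
    splitRel (Kmap n p) C i = Kmap n (mergeRel p X Y) := by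
  funext x y
  apply propext
  have hsupp : ∀ a b, mergeRel p X Y a b → a ∈ Idx n ∧ b ∈ Idx n := fun _ _ h =>
    h.elim (fun h => ⟨hp.mem_left h, hp.mem_right h⟩) fun h => ⟨hp.mem_left h.1, hp.mem_left h.2.1⟩
  rw [Kmap_iff hsupp, saturated_mergeRel_iff hp hX hY hc₁ hci₁]
  constructor
  · rintro ⟨hxy, hparts⟩
    obtain ⟨hx, hy, hS⟩ := (Kmap_iff_of_isPartitionOn hp).1 hxy
    exact ⟨hx, hy, hS, (nthSmall_mem_uIoc_iff hp hC hi hic hxy).2 hparts⟩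
  · rintro ⟨hx, hy, hS, hiff⟩
    have hxy := (Kmap_iff_of_isPartitionOn hp).2 ⟨hx, hy, hS⟩
    exact ⟨hxy, (nthSmall_mem_uIoc_iff hp hC hi hic hxy).1 hiff⟩

end SplitMerge

/-- The enveloping blocks `C^B`, `C^B_i` (resp. `B^C`, `B^C_i`) are quantified through their
defining properties: blocks of `K(p)` (resp. of `p`) adjacent to `B` (resp. `C`) in `p°`, of depth
at most (resp. strictly larger than) that of `B` (resp. `C`), the lower ones lying strictly
between the positions of the `i`-th and `(i+1)`-th smallest elements of the given block. -/
theorem kreweras_split_merge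
    (n : ℕ) (p : ℕ → ℕ → Prop)
    (hp : IsPartitionOn (Idx n) p) (hnc : NonCrossing p) :
    (∀ B : Set ℕ, IsBlock p B → ∀ i, 1 ≤ i → i ≤ B.ncard - 1 →
      ∀ CB : Set ℕ, IsBlock (Kmap n p) CB →
        Adjacent (pCirc n p) (oddPos '' B) (evenPos '' CB) →
        depth (pCirc n p) (evenPos '' CB) ≤ depth (pCirc n p) (oddPos '' B) →
      ∀ CBi : Set ℕ, IsBlock (Kmap n p) CBi →
        Adjacent (pCirc n p) (oddPos '' B) (evenPos '' CBi) →
        depth (pCirc n p) (oddPos '' B) < depth (pCirc n p) (evenPos '' CBi) →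
        (∀ x ∈ evenPos '' CBi,
          oddPos (nthSmall B i) < x ∧ x < oddPos (nthSmall B (i + 1))) →
      Kmap n (splitRel p B i) = mergeRel (Kmap n p) CB CBi) ∧
    (∀ C : Set ℕ, IsBlock (Kmap n p) C → ∀ i, 1 ≤ i → i ≤ C.ncard - 1 →
      ∀ BC : Set ℕ, IsBlock p BC →
        Adjacent (pCirc n p) (evenPos '' C) (oddPos '' BC) →
        depth (pCirc n p) (oddPos '' BC) ≤ depth (pCirc n p) (evenPos '' C) →
      ∀ BCi : Set ℕ, IsBlock p BCi →
        Adjacent (pCirc n p) (evenPos '' C) (oddPos '' BCi) →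
        depth (pCirc n p) (evenPos '' C) < depth (pCirc n p) (oddPos '' BCi) →
        (∀ x ∈ oddPos '' BCi,
          evenPos (nthSmall C i) < x ∧ x < evenPos (nthSmall C (i + 1))) →
      splitRel (Kmap n p) C i = Kmap n (mergeRel p BC BCi)) := by
  refine ⟨fun B hB i hi hiB CB hCB hadj hdep CBi hCBi hadji _ hpos => ?_,
    fun C hC i hi hiC BC hBC hadj hdep BCi hBCi hadji _ hpos => ?_⟩
  · have hir : i < B.ncard := by omega
    exact Kmap_splitRel hp hnc hB hi hir hCB (nthSmall_ncard_mem_of_adjacent hp hB hCB hadj hdep)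
      hCBi (nthSmall_mem_of_adjacent_of_between hp hB hi hir hCBi hadji hpos)
  · have hic : i < C.ncard := by omega
    exact splitRel_Kmap hp hC hi hic hBC (nthSmall_one_mem_of_adjacent hp hnc hC hBC hadj hdep)
      hBCi (nthSmall_succ_mem_of_adjacent_of_between hp hnc hC hi hic hBCi hadji hpos)

end NCPaper
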